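/- arXiv:2512.19345 — 2 statements merged into one kernel-verified Lean document; each statement's English description precedes it below -/
import Mathlib

section
/- Let p be a prime and let G be a finite Abelian p-group with |G| = p^n and exponent p^e. Then the set of orders of kernels of the irreducible complex characters of G is exactly {p^{n-e}, p^{n-e+1}, …, p^n}. In particular, if G is elementary Abelian with |G| = p^n, this set is {p^{n-1}, p^n}. -/
open CategoryTheory

/-- The kernel of the character of a complex representation `V` of `G`:
`ker χ = {g ∈ G : χ(g) = χ(1)}`. -/
noncomputable def charKer {G : Type} [Group G] (V : FDRep ℂ G) : Set G :=
  {g | V.character g = V.character 1}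

/-- The center of the character of a complex representation `V` of `G`:
`Z(χ) = {g ∈ G : |χ(g)| = χ(1)}`. -/
noncomputable def charCenter {G : Type} [Group G] (V : FDRep ℂ G) : Set G :=
  {g | (‖V.character g‖ : ℂ) = V.character 1}

/-!
A simple complex representation of a finite abelian group is one-dimensional by Schur's lemma,
so its character is a homomorphism `φ : G →* ℂˣ` with `ker χ = ker φ`, and every such `φ` arises.
Hence `|ker χ| = |G| / ord φ`, and since the dual group `G →* ℂˣ` is isomorphic to `G`, the orders
`ord φ` are exactly the divisors `p ^ i`, `i ≤ e`, of the exponent.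
-/

open Module

section OrderOfUnitsHom

variable {G : Type*} [Group G]

theorem MonoidHom.orderOf_eq_exponent_range {H : Type*} [CommGroup H] (φ : G →* H) :
    orderOf φ = Monoid.exponent φ.range := by
  refine Nat.dvd_right_iff_eq.mp fun n => ?_
  rw [orderOf_dvd_iff_pow_eq_one, Monoid.exponent_dvd_iff_forall_pow_eq_one]
  simp [MonoidHom.ext_iff, Subtype.ext_iff]

variable [Finite G] {K : Type*} [Field K]

theorem MonoidHom.card_range_eq_orderOf (φ : G →* Kˣ) : Nat.card φ.range = orderOf φ := by
  have : Finite φ.range := Finite.of_surjective _ φ.rangeRestrict_surjective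
  have : IsCyclic φ.range := isCyclic_subgroup_units _
  rw [φ.orderOf_eq_exponent_range, IsCyclic.exponent_eq_card]

theorem MonoidHom.card_ker_mul_orderOf (φ : G →* Kˣ) :
    Nat.card φ.ker * orderOf φ = Nat.card G := by
  rw [← φ.card_range_eq_orderOf, mul_comm,
    ← Nat.card_congr (QuotientGroup.quotientKerEquivRange φ).toEquiv,
    ← Subgroup.card_eq_card_quotient_mul_card_subgroup]

end OrderOfUnitsHom

theorem Monoid.range_orderOf_eq {G : Type*} [CommMonoid G] (hG : Monoid.ExponentExists G) :
    Set.range (orderOf : G → ℕ) = {d | d ∣ Monoid.exponent G} := by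
  refine Set.Subset.antisymm (Set.range_subset_iff.mpr Monoid.order_dvd_exponent) fun d hd => ?_
  obtain ⟨g, hg⟩ := Monoid.exists_orderOf_eq_exponent hG
  exact ⟨g ^ (orderOf g / d), orderOf_pow_orderOf_div (hg ▸ hG.exponent_ne_zero) (hg ▸ hd)⟩

theorem CommGroup.range_card_ker_unitsHom (G K : Type*) [CommGroup G] [Finite G] [Field K]
    [HasEnoughRootsOfUnity K (Monoid.exponent G)] :
    Set.range (fun φ : G →* Kˣ => Nat.card φ.ker) =
      (Nat.card G / ·) '' {d | d ∣ Monoid.exponent G} := by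
  obtain ⟨e⟩ := CommGroup.monoidHom_mulEquiv_of_hasEnoughRootsOfUnity G K
  have hcard (φ : G →* Kˣ) : Nat.card φ.ker = Nat.card G / orderOf (e φ) := by
    rw [e.orderOf_eq, ← φ.card_ker_mul_orderOf, Nat.mul_div_cancel _ (orderOf_pos φ)]
  rw [← Monoid.range_orderOf_eq Monoid.ExponentExists.of_finite, ← Set.range_comp,
    ← e.surjective.range_comp]
  exact congrArg Set.range (funext hcard)

theorem image_div_setOf_dvd_prime_pow {p n e : ℕ} (hp : p.Prime) (hen : e ≤ n) :
    (p ^ n / ·) '' {d | d ∣ p ^ e} = {k | ∃ j, n - e ≤ j ∧ j ≤ n ∧ k = p ^ j} := by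
  ext k
  constructor
  · rintro ⟨d, hd, rfl⟩
    obtain ⟨i, hi, rfl⟩ := (Nat.dvd_prime_pow hp).mp hd
    exact ⟨n - i, by omega, by omega, Nat.pow_div (by omega) hp.pos⟩
  · rintro ⟨j, hj, hjn, rfl⟩
    refine ⟨p ^ (n - j), pow_dvd_pow p (by omega), ?_⟩
    simp only [Nat.pow_div (Nat.sub_le n j) hp.pos, Nat.sub_sub_self hjn]

theorem setOf_pow_sub_one_le_le_eq (p n : ℕ) :
    {k | ∃ j, n - 1 ≤ j ∧ j ≤ n ∧ k = p ^ j} = {p ^ (n - 1), p ^ n} := by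
  ext k
  simp only [Set.mem_ofPred_eq, Set.mem_insert_iff, Set.mem_singleton_iff]
  constructor
  · rintro ⟨j, hj, hjn, rfl⟩
    rcases (by omega : j = n - 1 ∨ j = n) with rfl | rfl <;> simp
  · rintro (rfl | rfl)
    exacts [⟨n - 1, le_rfl, Nat.sub_le n 1, rfl⟩, ⟨n, Nat.sub_le n 1, le_rfl, rfl⟩]

namespace FDRep

variable {k G : Type} [Field k]

theorem nontrivial_of_simple [Monoid G] (V : FDRep k G) [Simple V] : Nontrivial V := by
  by_contra h
  rw [not_nontrivial_iff_subsingleton] at h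
  exact id_nonzero V (Action.hom_ext _ _ (by ext v; exact Subsingleton.elim _ _))

section Group

variable [Group G]

noncomputable def ofUnitsHom (φ : G →* kˣ) : FDRep k G :=
  FDRep.of (((Algebra.lmul k k).toRingHom.toMonoidHom.comp (Units.coeHom k)).comp φ)

theorem character_ofUnitsHom (φ : G →* kˣ) (g : G) : (ofUnitsHom φ).character g = φ g :=
  Algebra.trace_self_apply _

theorem simple_ofUnitsHom [IsAlgClosed k] [CharZero k] [Fintype G] (φ : G →* kˣ) :
    Simple (ofUnitsHom φ) := by
  rw [simple_iff_char_is_norm_one]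
  simp [character_ofUnitsHom]

theorem charKer_ofUnitsHom (φ : G →* ℂˣ) : charKer (ofUnitsHom φ) = φ.ker := by
  ext g
  simp only [charKer, Set.mem_ofPred_eq, SetLike.mem_coe, MonoidHom.mem_ker, character_ofUnitsHom,
    map_one, Units.val_one, Units.val_eq_one]

end Group

section CommGroup

variable [CommGroup G]

noncomputable def applyAsHom (V : FDRep k G) (g : G) : V ⟶ V :=
  ⟨FGModuleCat.ofHom (V.ρ g), fun h => by
    ext v
    change V.ρ g (V.ρ h v) = V.ρ h (V.ρ g v)
    rw [← Module.End.mul_apply, ← map_mul, mul_comm, map_mul, Module.End.mul_apply]⟩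

theorem exists_unitsHom_ρ_eq_smul_id [IsAlgClosed k] (V : FDRep k G) [Simple V] :
    ∃ φ : G →* kˣ, ∀ g, V.ρ g = (φ g : k) • LinearMap.id := by
  have := nontrivial_of_simple V
  have hscalar (g : G) : ∃ c : k, algebraMap k (Module.End k V) c = V.ρ g :=
    (endomorphism_simple_eq_smul_id k (V.applyAsHom g)).imp fun c hc => by
      rw [Module.algebraMap_end_eq_smul_id]
      exact congrArg (fun f => f.hom.hom.hom) hc
  choose c hc using hscalar
  have hinj := FaithfulSMul.algebraMap_injective k (Module.End k V)
  let φ : G →* k :=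
    { toFun := c
      map_one' := hinj (by rw [hc, map_one, map_one])
      map_mul' := fun g h => hinj (by rw [map_mul, hc, hc, hc, map_mul]) }
  exact ⟨φ.toHomUnits, fun g => by rw [← Module.algebraMap_end_eq_smul_id]; exact (hc g).symm⟩

theorem exists_unitsHom_charKer_eq (V : FDRep ℂ G) [Simple V] :
    ∃ φ : G →* ℂˣ, charKer V = φ.ker := by
  obtain ⟨φ, hφ⟩ := exists_unitsHom_ρ_eq_smul_id V
  have := nontrivial_of_simple V
  have hchar (g : G) : V.character g = φ g * finrank ℂ V := by
    rw [FDRep.character, hφ, map_smul, LinearMap.trace_id, smul_eq_mul]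
  refine ⟨φ, Set.ext fun g => ?_⟩
  simp only [charKer, Set.mem_ofPred_eq, SetLike.mem_coe, MonoidHom.mem_ker, hchar, map_one,
    Units.val_one, one_mul, ← Units.val_eq_one]
  exact mul_eq_right₀ (Nat.cast_ne_zero.mpr finrank_pos.ne')

theorem setOf_card_charKer_simple_eq [Fintype G] :
    {k | ∃ V : FDRep ℂ G, Simple V ∧ Nat.card (charKer V) = k} =
      Set.range fun φ : G →* ℂˣ => Nat.card φ.ker := by
  ext k
  constructor
  · rintro ⟨V, hV, rfl⟩
    obtain ⟨φ, hφ⟩ := exists_unitsHom_charKer_eq V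
    exact ⟨φ, by rw [hφ]; rfl⟩
  · rintro ⟨φ, rfl⟩
    exact ⟨ofUnitsHom φ, simple_ofUnitsHom φ, by rw [charKer_ofUnitsHom]; rfl⟩

end CommGroup

end FDRep

/-- For a finite Abelian `p`-group `G` with `|G| = p ^ n` and exponent `p ^ e`, the set of
orders of kernels of irreducible complex characters of `G` is `{p^{n-e}, …, p^n}`.
In particular, if `G` is elementary Abelian this set is `{p^{n-1}, p^n}`. -/
theorem kernel_orders_abelian (p n e : ℕ) (hp : p.Prime) (G : Type) [CommGroup G]
    [Fintype G] (hcard : Nat.card G = p ^ n) (hexp : Monoid.exponent G = p ^ e) :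
    {k : ℕ | ∃ V : FDRep ℂ G, Simple V ∧ Nat.card (charKer V) = k} =
      {k : ℕ | ∃ j : ℕ, n - e ≤ j ∧ j ≤ n ∧ k = p ^ j} ∧
    ((∀ g : G, g ^ p = 1) →
      {k : ℕ | ∃ V : FDRep ℂ G, Simple V ∧ Nat.card (charKer V) = k} =
        {p ^ (n - 1), p ^ n}) := by
  have hen : e ≤ n := (Nat.pow_dvd_pow_iff_le_right hp.one_lt).mp
    (hexp ▸ hcard ▸ Group.exponent_dvd_nat_card)
  have hkernels : {k : ℕ | ∃ V : FDRep ℂ G, Simple V ∧ Nat.card (charKer V) = k} =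
      {k : ℕ | ∃ j : ℕ, n - e ≤ j ∧ j ≤ n ∧ k = p ^ j} := by
    rw [FDRep.setOf_card_charKer_simple_eq, CommGroup.range_card_ker_unitsHom, hcard, hexp,
      image_div_setOf_dvd_prime_pow hp hen]
  refine ⟨hkernels, fun helem => ?_⟩
  have he : e ≤ 1 := (Nat.pow_dvd_pow_iff_le_right hp.one_lt).mp
    (hexp ▸ (pow_one p).symm ▸ Monoid.exponent_dvd_of_forall_pow_eq_one helem)
  have hn : e = 0 → n = 0 := by
    rintro rfl
    have : Subsingleton G := Monoid.exp_eq_one_iff.mp (by rw [hexp, pow_zero])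
    exact (Nat.pow_eq_one.mp (hcard ▸ Nat.card_of_subsingleton 1)).resolve_left hp.ne_one
  -- when `e = 0` also `n = 0`, and `n - 1` truncates to `0`
  rw [hkernels, show n - e = n - 1 by omega, setOf_pow_sub_one_le_le_eq]
end

section
/- Let p be an odd prime and let G be a finite p-group with |G'| = p. Then (G, Z(G)) is a generalized Camina pair; that is, every non-linear irreducible complex character of G vanishes on G \ Z(G). -/
/-!
Conjugation acts on the normal subgroup `G'` of order `p` through `Aut(C_p)`, a group of
order `p - 1`, which is coprime to the orders of the elements of the `p`-group `G`; so `G'`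
is central. If `g ∉ Z(G)`, pick `x` with `c = ⁅x, g⁆ ≠ 1`. By Schur's lemma the central
element `c` acts on an irreducible `V` by a scalar `ω`, and
`χ(g) = χ(x g x⁻¹) = χ(c g) = ω χ(g)`. If `ω = 1`, then `c`, and with it `G' = ⟨c⟩`, acts
trivially, so the operators `ρ(a)` commute and `V` is one-dimensional. Hence `ω ≠ 1` and
`χ(g) = 0`.
-/

open CategoryTheory

section GroupTheory

variable {G : Type*} [Group G]

theorem Subgroup.le_of_mem_of_card_eq_prime {p : ℕ} [Fact p.Prime] {H K : Subgroup G}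
    (hH : Nat.card H = p) {c : G} (hcH : c ∈ H) (hc : c ≠ 1) (hcK : c ∈ K) : H ≤ K := by
  have : Fact (Nat.card H).Prime := hH ▸ inferInstance
  refine subgroupOf_eq_top.mp ((K.subgroupOf H).eq_bot_or_eq_top_of_prime_card.resolve_left ?_)
  intro hbot
  have : (⟨c, hcH⟩ : H) ∈ K.subgroupOf H := hcK
  rw [hbot, mem_bot] at this
  exact hc (congrArg Subtype.val this)

theorem IsPGroup.le_center_of_card_eq_prime {p : ℕ} [hp : Fact p.Prime] (hG : IsPGroup p G)
    {N : Subgroup G} [N.Normal] (hN : Nat.card N = p) : N ≤ Subgroup.center G := by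
  have : Finite N := Nat.finite_of_card_ne_zero (hN ▸ hp.out.ne_zero)
  have : IsCyclic N := isCyclic_of_prime_card hN
  have hconj : ∀ g : G, MulAut.conjNormal (H := N) g = 1 := fun g => by
    obtain ⟨k, hk⟩ := hG g
    have hcop : Nat.Coprime (p ^ k) (p - 1) := Nat.Coprime.pow_left k
      ((Nat.coprime_self_sub_right hp.out.one_le).mpr (Nat.coprime_one_right p))
    refine orderOf_eq_one_iff.mp (Nat.eq_one_of_dvd_coprimes hcop ?_ ?_)
    · exact (orderOf_map_dvd _ g).trans (orderOf_dvd_of_pow_eq_one hk)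
    · rw [← Nat.totient_prime hp.out, ← hN, ← IsCyclic.card_mulAut]
      exact orderOf_dvd_natCard _
  intro n hn
  refine Subgroup.mem_center_iff.mpr fun g => ?_
  have := congrArg Subtype.val (DFunLike.congr_fun (hconj g) ⟨n, hn⟩)
  rw [MulAut.conjNormal_apply] at this
  exact (eq_mul_inv_iff_mul_eq.mp this.symm).symm

open scoped commutatorElement in
theorem MonoidHom.commute_of_commutator_le_ker {M : Type*} [Monoid M] (f : G →* M)
    (h : commutator G ≤ f.ker) (a b : G) : Commute (f a) (f b) := by
  have hab : f ⁅a, b⁆ = 1 :=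
    h (Subgroup.commutator_mem_commutator (Subgroup.mem_top a) (Subgroup.mem_top b))
  calc f a * f b = f (⁅a, b⁆ * (b * a)) := by rw [← map_mul, commutatorElement_def]; group
  _ = f b * f a := by rw [map_mul, hab, one_mul, map_mul]

end GroupTheory

namespace FDRep

variable {k : Type*} [Field k] {G : Type*} [Monoid G] (V : FDRep k G)

def endOfCommute (f : V →ₗ[k] V) (hf : ∀ g, Commute (V.ρ g) f) : V ⟶ V where
  hom := FGModuleCat.ofHom f
  comm g := by
    ext v
    exact LinearMap.congr_fun (hf g).symm v

theorem exists_eq_smul_one_of_commute [IsAlgClosed k] [Simple V] (f : V →ₗ[k] V)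
    (hf : ∀ g, Commute (V.ρ g) f) : ∃ c : k, f = c • 1 := by
  obtain ⟨c, hc⟩ := endomorphism_simple_eq_smul_id k (V.endOfCommute f hf)
  exact ⟨c, congrArg (fun φ : V ⟶ V => φ.hom.hom.hom) hc.symm⟩

theorem exists_ρ_eq_smul_one_of_mem_center [IsAlgClosed k] [Simple V] {c : G}
    (hc : c ∈ Submonoid.center G) : ∃ ω : k, V.ρ c = ω • 1 :=
  V.exists_eq_smul_one_of_commute (V.ρ c) fun g => by
    rw [Commute, SemiconjBy, ← map_mul, ← map_mul, Submonoid.mem_center_iff.mp hc g]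

theorem character_mul_of_ρ_eq_smul_one {c : G} {ω : k} (hω : V.ρ c = ω • 1) (g : G) :
    V.character (c * g) = ω * V.character g := by
  rw [character, character, map_mul, hω, smul_mul_assoc, one_mul, map_smul, smul_eq_mul]

theorem finrank_le_one_of_commute [IsAlgClosed k] [Simple V]
    (h : ∀ a b, Commute (V.ρ a) (V.ρ b)) : Module.finrank k V ≤ 1 := by
  have hscalar : ∀ f : Module.End k V, ∃ c : k, c • 1 = f := fun f => by
    obtain ⟨c, hc⟩ := V.exists_eq_smul_one_of_commute f fun g => by
      obtain ⟨ω, hω⟩ := V.exists_eq_smul_one_of_commute (V.ρ g) fun a => h a g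
      exact hω ▸ (Commute.one_left f).smul_left ω
    exact ⟨c, hc.symm⟩
  have hle : Module.finrank k (Module.End k V) ≤ 1 :=
    (LinearMap.finrank_le_finrank_of_surjective (f := LinearMap.toSpanSingleton k _ 1)
      hscalar).trans_eq (Module.finrank_self k)
  rw [Module.finrank_linearMap] at hle
  nlinarith

end FDRep

open scoped commutatorElement

theorem gcp_of_commutator_order_p_general (p : ℕ) (hp : p.Prime)
    (G : Type) [Group G] (hpG : IsPGroup p G)
    (hG' : Nat.card (commutator G) = p) :
    ∀ V : FDRep ℂ G, Simple V → 1 < Module.finrank ℂ V →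
      ∀ g : G, g ∉ Subgroup.center G → V.character g = 0 := by
  intro V hV hdim g hg
  have : Fact p.Prime := ⟨hp⟩
  obtain ⟨x, hxg⟩ := not_forall.mp (mt Subgroup.mem_center_iff.mpr hg)
  have hx : ⁅x, g⁆ ≠ 1 := mt commutatorElement_eq_one_iff_mul_comm.mp hxg
  have hc : ⁅x, g⁆ ∈ commutator G :=
    Subgroup.commutator_mem_commutator (Subgroup.mem_top x) (Subgroup.mem_top g)
  obtain ⟨ω, hω⟩ :=
    V.exists_ρ_eq_smul_one_of_mem_center (hpG.le_center_of_card_eq_prime hG' hc)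
  have hω1 : ω ≠ 1 := by
    rintro rfl
    have hker : commutator G ≤ V.ρ.ker :=
      Subgroup.le_of_mem_of_card_eq_prime hG' hc hx (by simpa using hω)
    exact hdim.not_ge (V.finrank_le_one_of_commute (V.ρ.commute_of_commutator_le_ker hker))
  have hχ : ω * V.character g = V.character g :=
    calc ω * V.character g
      _ = V.character (⁅x, g⁆ * g) := (V.character_mul_of_ρ_eq_smul_one hω g).symm
      _ = V.character (x * g * x⁻¹) := by rw [commutatorElement_def]; group
      _ = V.character g := V.char_conj g x
  exact (mul_left_eq_self₀.mp hχ).resolve_left hω1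

/-- Let `p` be an odd prime and `G` a finite `p`-group with `|G'| = p`. Then
`(G, Z(G))` is a generalized Camina pair: every non-linear irreducible complex character
of `G` vanishes on `G \ Z(G)`. -/
theorem gcp_of_commutator_order_p (p : ℕ) (hp : p.Prime) (hodd : Odd p)
    (G : Type) [Group G] [Fintype G] (hpG : IsPGroup p G)
    (hG' : Nat.card (commutator G) = p) :
    ∀ V : FDRep ℂ G, Simple V → 1 < Module.finrank ℂ V →
      ∀ g : G, g ∉ Subgroup.center G → V.character g = 0 :=
  gcp_of_commutator_order_p_general p hp G hpG hG'
end
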